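/- arXiv:1911.08474 — 3 statements merged into one kernel-verified Lean document; each statement's English description precedes it below -/
import Mathlib

section
/- Let μ be a nonnegative Radon measure on an open set Ω ⊂ ℝⁿ containing the closed unit ball B₁, and let m be a positive integer. Then limsup_{r→0⁺} r^m ∫_{B₁ \ B_r} |y|^{-(n-1+m)} dμ(y) ≤ C(n,m) · limsup_{r→0⁺} μ(B_r)/r^{n-1}, where C(n,m) is a constant depending only on n and m. -/
open MeasureTheory Metric Filter Set
open scoped Topology ENNReal

/-!
Write `‖y‖ ^ (-a) = (‖y‖⁻¹) ^ a` with `a = d + m` (here `d = n - 1`) and apply the layer-cake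
formula. The superlevel set `{t < ‖y‖⁻¹}` lies in the ball of radius `t⁻¹`, and it misses the
annulus `B_R \ B_r` once `t ≥ r⁻¹`. If `μ (B_s) ≤ K s ^ d` for `s < u`, the levels `t > u⁻¹`
therefore contribute at most `a K ∫₀^{r⁻¹} t ^ (m - 1) dt = (a / m) K r ^ (-m)`, while the
levels `t ≤ u⁻¹` contribute at most `μ (B_R) u ^ (-a)`, which the factor `r ^ m` kills as
`r → 0`. Choosing `K = sup_{0 < s < u} μ (B_s) / s ^ d` and letting `u → 0` gives the constant
`C(n, m) = (n - 1 + m) / m`.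
-/

lemma lintegral_Ioc_zero_rpow_sub_one {p T : ℝ} (hp : 0 < p) (hT : 0 ≤ T) :
    ∫⁻ t in Ioc 0 T, ENNReal.ofReal (t ^ (p - 1)) = ENNReal.ofReal (T ^ p / p) := by
  rw [← ofReal_integral_eq_lintegral_ofReal, ← intervalIntegral.integral_of_le hT,
    integral_rpow (Or.inl (by linarith)), sub_add_cancel, Real.zero_rpow hp.ne', sub_zero]
  · exact (intervalIntegral.intervalIntegrable_rpow' (by linarith)).1
  · exact (ae_restrict_iff' measurableSet_Ioc).2
      (ae_of_all _ fun t ht => Real.rpow_nonneg ht.1.le _)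

section Annulus

variable {E : Type*} [SeminormedAddCommGroup E]

lemma setOf_lt_norm_inv_subset_ball {t : ℝ} (ht : 0 < t) :
    {y : E | t < ‖y‖⁻¹} ⊆ ball 0 t⁻¹ :=
  fun _ hy => mem_ball_zero_iff.2 <| (lt_inv_comm₀ ht (inv_pos.1 (ht.trans hy))).1 hy

lemma setOf_lt_norm_inv_inter_diff_ball_eq_empty {s : Set E} {r t : ℝ} (hr : 0 < r)
    (ht : r⁻¹ ≤ t) : {y : E | t < ‖y‖⁻¹} ∩ (s \ ball 0 r) = ∅ := by
  refine eq_empty_of_forall_notMem ?_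
  rintro y ⟨hy, -, hyr⟩
  rw [mem_ball_zero_iff, not_lt] at hyr
  exact (hy.trans_le ((inv_anti₀ hr hyr).trans ht)).false

variable [MeasurableSpace E] {μ : Measure E}

lemma measure_superlevel_inter_annulus_mul_rpow_le {d m r u R t : ℝ} {K : ℝ≥0∞}
    (hr : 0 < r) (hu : 0 < u) (hK : ∀ s ∈ Ioo 0 u, μ (ball 0 s) ≤ K * ENNReal.ofReal (s ^ d))
    (ht : 0 < t) :
    μ ({y | t < ‖y‖⁻¹} ∩ (ball 0 R \ ball 0 r)) * ENNReal.ofReal (t ^ (d + m - 1)) ≤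
      (Ioc 0 u⁻¹).indicator (fun t => μ (ball 0 R) * ENNReal.ofReal (t ^ (d + m - 1))) t +
        (Ioc 0 r⁻¹).indicator (fun t => K * ENNReal.ofReal (t ^ (m - 1))) t := by
  rcases le_or_gt r⁻¹ t with htr | htr
  · rw [setOf_lt_norm_inv_inter_diff_ball_eq_empty hr htr, measure_empty, zero_mul]
    exact zero_le
  rcases le_or_gt t u⁻¹ with htu | htu
  · rw [indicator_of_mem (show t ∈ Ioc 0 u⁻¹ from ⟨ht, htu⟩)]
    exact le_add_right (by gcongr; exact inter_subset_right.trans sdiff_subset)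
  · rw [indicator_of_mem (show t ∈ Ioc 0 r⁻¹ from ⟨ht, htr.le⟩)]
    refine le_add_left ?_
    have hpow : t⁻¹ ^ d * t ^ (d + m - 1) = t ^ (m - 1) := by
      rw [Real.inv_rpow ht.le, ← Real.rpow_neg ht.le, ← Real.rpow_add ht]
      ring_nf
    calc μ ({y | t < ‖y‖⁻¹} ∩ (ball 0 R \ ball 0 r)) * ENNReal.ofReal (t ^ (d + m - 1))
        ≤ μ (ball 0 t⁻¹) * ENNReal.ofReal (t ^ (d + m - 1)) := by
          gcongr; exact inter_subset_left.trans (setOf_lt_norm_inv_subset_ball ht)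
      _ ≤ K * ENNReal.ofReal (t⁻¹ ^ d) * ENNReal.ofReal (t ^ (d + m - 1)) := by
          gcongr; exact hK _ ⟨inv_pos.2 ht, (inv_lt_comm₀ ht hu).2 htu⟩
      _ = K * ENNReal.ofReal (t ^ (m - 1)) := by
          rw [mul_assoc, ← ENNReal.ofReal_mul (by positivity), hpow]

variable [OpensMeasurableSpace E]

lemma lintegral_annulus_norm_rpow_neg_le {d m r u R : ℝ} {K : ℝ≥0∞}
    (hm : 0 < m) (hdm : 0 < d + m) (hr : 0 < r) (hu : 0 < u)
    (hK : ∀ s ∈ Ioo 0 u, μ (ball 0 s) ≤ K * ENNReal.ofReal (s ^ d)) :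
    ∫⁻ y in ball 0 R \ ball 0 r, ENNReal.ofReal (‖y‖ ^ (-(d + m))) ∂μ ≤
      μ (ball 0 R) * ENNReal.ofReal (u ^ (-(d + m))) +
        ENNReal.ofReal ((d + m) / m) * K * ENNReal.ofReal (r ^ (-m)) := by
  have hS : MeasurableSet (ball (0 : E) R \ ball 0 r) :=
    measurableSet_ball.diff measurableSet_ball
  simp_rw [Real.rpow_neg (norm_nonneg _), ← Real.inv_rpow (norm_nonneg _)]
  rw [lintegral_rpow_eq_lintegral_meas_lt_mul _
    (ae_of_all _ fun y => inv_nonneg.2 (norm_nonneg y)) (by fun_prop) hdm]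
  calc ENNReal.ofReal (d + m) * ∫⁻ t in Ioi 0,
        μ.restrict (ball 0 R \ ball 0 r) {y | t < ‖y‖⁻¹} * ENNReal.ofReal (t ^ (d + m - 1))
      ≤ ENNReal.ofReal (d + m) * ∫⁻ t in Ioi 0,
          ((Ioc 0 u⁻¹).indicator (fun t => μ (ball 0 R) * ENNReal.ofReal (t ^ (d + m - 1))) t +
            (Ioc 0 r⁻¹).indicator (fun t => K * ENNReal.ofReal (t ^ (m - 1))) t) := by
        refine mul_le_mul_right (setLIntegral_mono' measurableSet_Ioi fun t ht => ?_) _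
        rw [Measure.restrict_apply' hS]
        exact measure_superlevel_inter_annulus_mul_rpow_le hr hu hK ht
    _ = ENNReal.ofReal (d + m) * (μ (ball 0 R) * ENNReal.ofReal (u⁻¹ ^ (d + m) / (d + m)) +
          K * ENNReal.ofReal (r⁻¹ ^ m / m)) := by
        rw [lintegral_add_left ((by fun_prop : Measurable _).indicator measurableSet_Ioc)]
        simp only [setLIntegral_indicator measurableSet_Ioc, Ioc_inter_Ioi, max_self]
        rw [lintegral_const_mul _ (by fun_prop), lintegral_const_mul _ (by fun_prop),
          lintegral_Ioc_zero_rpow_sub_one hdm (inv_pos.2 hu).le,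
          lintegral_Ioc_zero_rpow_sub_one hm (inv_pos.2 hr).le]
    _ = _ := by
        have hu' : ENNReal.ofReal (d + m) * ENNReal.ofReal (u⁻¹ ^ (d + m) / (d + m)) =
            ENNReal.ofReal (u ^ (-(d + m))) := by
          rw [← ENNReal.ofReal_mul hdm.le, Real.inv_rpow hu.le, ← Real.rpow_neg hu.le,
            mul_div_cancel₀ _ hdm.ne']
        have hr' : ENNReal.ofReal (d + m) * ENNReal.ofReal (r⁻¹ ^ m / m) =
            ENNReal.ofReal ((d + m) / m) * ENNReal.ofReal (r ^ (-m)) := by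
          rw [← ENNReal.ofReal_mul hdm.le, ← ENNReal.ofReal_mul (div_pos hdm hm).le,
            Real.inv_rpow hr.le, ← Real.rpow_neg hr.le]
          ring_nf
        rw [mul_add, mul_left_comm, hu', mul_left_comm, hr', mul_left_comm, mul_assoc]

lemma rpow_mul_lintegral_annulus_norm_rpow_neg_le {d m r u R : ℝ} {K : ℝ≥0∞}
    (hm : 0 < m) (hdm : 0 < d + m) (hr : 0 < r) (hu : 0 < u)
    (hK : ∀ s ∈ Ioo 0 u, μ (ball 0 s) ≤ K * ENNReal.ofReal (s ^ d)) :
    ENNReal.ofReal (r ^ m) *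
        ∫⁻ y in ball 0 R \ ball 0 r, ENNReal.ofReal (‖y‖ ^ (-(d + m))) ∂μ ≤
      ENNReal.ofReal (r ^ m) * (μ (ball 0 R) * ENNReal.ofReal (u ^ (-(d + m)))) +
        ENNReal.ofReal ((d + m) / m) * K := by
  have hr' : ENNReal.ofReal (r ^ m) * ENNReal.ofReal (r ^ (-m)) = 1 := by
    rw [← ENNReal.ofReal_mul (by positivity), ← Real.rpow_add hr, add_neg_cancel,
      Real.rpow_zero, ENNReal.ofReal_one]
  calc _ ≤ ENNReal.ofReal (r ^ m) * (μ (ball 0 R) * ENNReal.ofReal (u ^ (-(d + m))) +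
          ENNReal.ofReal ((d + m) / m) * K * ENNReal.ofReal (r ^ (-m))) :=
        mul_le_mul_right (lintegral_annulus_norm_rpow_neg_le hm hdm hr hu hK) _
    _ = _ := by rw [mul_add, mul_left_comm _ (_ * K), hr', mul_one]

theorem limsup_rpow_mul_lintegral_annulus_le {d m R : ℝ} (hm : 0 < m) (hdm : 0 < d + m)
    (hR : μ (ball 0 R) ≠ ∞) :
    limsup (fun r : ℝ => ENNReal.ofReal (r ^ m) *
        ∫⁻ y in ball 0 R \ ball 0 r, ENNReal.ofReal (‖y‖ ^ (-(d + m))) ∂μ) (𝓝[>] 0) ≤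
      ENNReal.ofReal ((d + m) / m) *
        limsup (fun r : ℝ => μ (ball 0 r) / ENNReal.ofReal (r ^ d)) (𝓝[>] 0) := by
  set ratio : ℝ → ℝ≥0∞ := fun s => μ (ball 0 s) / ENNReal.ofReal (s ^ d)
  rw [(nhdsGT_basis (0 : ℝ)).limsup_eq_iInf_iSup (u := ratio)]
  simp only [ENNReal.mul_iInf_of_ne (ENNReal.ofReal_pos.2 (div_pos hdm hm)).ne'
    ENNReal.ofReal_ne_top]
  refine le_iInf₂ fun u hu => ?_
  have hK : ∀ s ∈ Ioo 0 u,
      μ (ball 0 s) ≤ (⨆ s ∈ Ioo 0 u, ratio s) * ENNReal.ofReal (s ^ d) := fun s hs =>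
    (ENNReal.div_le_iff (ENNReal.ofReal_pos.2 (Real.rpow_pos_of_pos hs.1 d)).ne'
      ENNReal.ofReal_ne_top).1 (le_iSup₂ (f := fun s _ => ratio s) s hs)
  have hpow : Tendsto (fun r : ℝ => ENNReal.ofReal (r ^ m)) (𝓝[>] 0) (𝓝 0) := by
    have := ENNReal.tendsto_ofReal <| (Real.continuousAt_rpow_const 0 m (Or.inr hm.le)).tendsto
      |>.mono_left (nhdsWithin_le_nhds (s := Ioi 0))
    rwa [Real.zero_rpow hm.ne', ENNReal.ofReal_zero] at this
  refine (limsup_le_limsup <| eventually_nhdsWithin_of_forall fun r (hr : r ∈ Ioi 0) =>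
    rpow_mul_lintegral_annulus_norm_rpow_neg_le hm hdm hr hu hK).trans (Tendsto.limsup_eq ?_).le
  simpa using (ENNReal.Tendsto.mul_const hpow
    (Or.inr (ENNReal.mul_ne_top hR ENNReal.ofReal_ne_top))).add_const _

end Annulus

/-- **Annulus Riesz potential estimate.** For a nonnegative Radon measure `μ` on an open set
`Ω ⊆ ℝⁿ` containing the closed unit ball, and `m ≥ 1`,
`limsup_{r→0⁺} r^m ∫_{B₁ \ B_r} |y|^{-(n-1+m)} dμ ≤ C(n,m) · limsup_{r→0⁺} μ(B_r)/r^{n-1}`. -/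
theorem stmt0 (n m : ℕ) (hm : 0 < m) :
    ∃ C : NNReal, 0 < C ∧
      ∀ (Ω : Set (EuclideanSpace ℝ (Fin n))), IsOpen Ω →
        Metric.closedBall (0 : EuclideanSpace ℝ (Fin n)) 1 ⊆ Ω →
        ∀ (μ : Measure (EuclideanSpace ℝ (Fin n))), IsFiniteMeasureOnCompacts μ →
          μ Ωᶜ = 0 →
          Filter.limsup
              (fun r : ℝ =>
                ENNReal.ofReal (r ^ m) *
                  ∫⁻ y in Metric.ball (0 : EuclideanSpace ℝ (Fin n)) 1 \ Metric.ball 0 r,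
                    ENNReal.ofReal (‖y‖ ^ (-((n : ℝ) - 1 + (m : ℝ)))) ∂μ)
              (nhdsWithin 0 (Set.Ioi 0)) ≤
            (C : ENNReal) *
              Filter.limsup
                (fun r : ℝ =>
                  μ (Metric.ball (0 : EuclideanSpace ℝ (Fin n)) r) /
                    ENNReal.ofReal (r ^ ((n : ℝ) - 1)))
                (nhdsWithin 0 (Set.Ioi 0)) := by
  rcases Nat.eq_zero_or_pos n with rfl | hn
  · refine ⟨1, one_pos, fun Ω _ _ μ _ _ => le_trans (limsup_le_of_le ?_ ?_) zero_le⟩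
    · isBoundedDefault
    filter_upwards [self_mem_nhdsWithin] with r (hr : 0 < r)
    have hempty : ball (0 : EuclideanSpace ℝ (Fin 0)) 1 \ ball 0 r = ∅ :=
      sdiff_eq_empty.2 fun y _ => by simpa [Subsingleton.elim y 0] using hr
    simp [hempty]
  · have hdm : (0 : ℝ) < n - 1 + m := by
      have : (1 : ℝ) ≤ n := by exact_mod_cast hn
      have : (0 : ℝ) < m := by exact_mod_cast hm
      linarith
    refine ⟨((n - 1 + m : ℝ) / m).toNNReal, Real.toNNReal_pos.2 (div_pos hdm (by positivity)),
      fun Ω _ _ μ _ _ => ?_⟩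
    have := limsup_rpow_mul_lintegral_annulus_le (μ := μ) (R := 1) (d := n - 1) (m := m)
      (by positivity) hdm measure_ball_lt_top.ne
    simp only [Real.rpow_natCast] at this
    exact this
end

section
/- Let n ≥ 3 and let ξ, η ∈ ℝⁿ be linearly independent vectors. Suppose a, b ∈ ℝⁿ satisfy the matrix equation Iₙ[(b·η) − (a·ξ)] = n[b⊙η − a⊙ξ], where x⊙y := ½(x⊗y + y⊗x) denotes the symmetric tensor product and Iₙ the identity matrix. Then a⊙ξ = b⊙η and a·ξ = b·η. -/
/-!
Since `n ≥ 3`, some `v ≠ 0` is orthogonal to both `ξ` and `η`. The quadratic form of `x ⊙ y`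
is `v ↦ (x·v)(y·v)`, so evaluating both sides of the equation on `v` gives
`((b·η) − (a·ξ)) |v|² = 0`. Hence the scalar vanishes, and with it `b⊙η − a⊙ξ`.
-/

open Matrix

/-- symmetric tensor product of two vectors: `x ⊙ y = ½(x⊗y + y⊗x)` -/
noncomputable def symProd {n : ℕ} (x y : Fin n → ℝ) : Matrix (Fin n) (Fin n) ℝ :=
  (2 : ℝ)⁻¹ • (Matrix.vecMulVec x y + Matrix.vecMulVec y x)

theorem exists_ne_zero_dotProduct_eq_zero_and_dotProduct_eq_zero {ι K : Type*} [Fintype ι]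
    [Field K] (hι : 2 < Fintype.card ι) (x y : ι → K) :
    ∃ v ≠ 0, x ⬝ᵥ v = 0 ∧ y ⬝ᵥ v = 0 := by
  have hker : LinearMap.ker (of ![x, y]).mulVecLin ≠ ⊥ :=
    LinearMap.ker_ne_bot_of_finrank_lt (by simpa using hι)
  obtain ⟨v, hv, hv0⟩ := Submodule.exists_mem_ne_zero_of_ne_bot hker
  exact ⟨v, hv0, congrFun hv 0, congrFun hv 1⟩

theorem dotProduct_symProd_mulVec {n : ℕ} (x y v : Fin n → ℝ) :
    v ⬝ᵥ (symProd x y *ᵥ v) = (x ⬝ᵥ v) * (y ⬝ᵥ v) := by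
  simp only [dotProduct_mulVec, symProd, vecMul_smul, vecMul_add, vecMul_vecMulVec,
    smul_dotProduct, add_dotProduct, smul_eq_mul]
  rw [dotProduct_comm x v, dotProduct_comm y v]
  ring

theorem stmt1_general (n : ℕ) (hn : 3 ≤ n) (ξ η a b : Fin n → ℝ)
    (heq : (dotProduct b η - dotProduct a ξ) • (1 : Matrix (Fin n) (Fin n) ℝ) =
      (n : ℝ) • (symProd b η - symProd a ξ)) :
    symProd a ξ = symProd b η ∧ dotProduct a ξ = dotProduct b η := by
  obtain ⟨v, hv0, hξv, hηv⟩ :=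
    exists_ne_zero_dotProduct_eq_zero_and_dotProduct_eq_zero (by rwa [Fintype.card_fin]) ξ η
  have htrace : dotProduct b η - dotProduct a ξ = 0 := by
    have hquad := congrArg (fun M => v ⬝ᵥ (M *ᵥ v)) heq
    simp only [smul_mulVec, one_mulVec, sub_mulVec, dotProduct_smul, dotProduct_sub,
      dotProduct_symProd_mulVec, hξv, hηv, mul_zero, sub_zero, smul_eq_mul] at hquad
    exact (mul_eq_zero.mp hquad).resolve_right (mt dotProduct_self_eq_zero.mp hv0)
  rw [htrace, zero_smul, eq_comm, smul_eq_zero, sub_eq_zero] at heq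
  exact ⟨(heq.resolve_left (by positivity)).symm, (sub_eq_zero.mp htrace).symm⟩

/-- If `n ≥ 3`, `ξ, η` are linearly independent and
`Iₙ[(b·η) − (a·ξ)] = n[b⊙η − a⊙ξ]`, then `a⊙ξ = b⊙η` and `a·ξ = b·η`. -/
theorem stmt1 (n : ℕ) (hn : 3 ≤ n) (ξ η a b : Fin n → ℝ)
    (hli : LinearIndependent ℝ ![ξ, η])
    (heq : (dotProduct b η - dotProduct a ξ) • (1 : Matrix (Fin n) (Fin n) ℝ) =
      (n : ℝ) • (symProd b η - symProd a ξ)) :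
    symProd a ξ = symProd b η ∧ dotProduct a ξ = dotProduct b η :=
  stmt1_general n hn ξ η a b heq
end

section
/- Let m ≥ 1, let V be a finite-dimensional complex vector space, and let ξ ∈ ℂⁿ be nonzero. Suppose F is a symmetric m-linear tensor with values in V (i.e., F ∈ V ⊗ Sym^m(ℂⁿ)* represented by coefficients F^j_β for multi-indices |β| = m) satisfying the curl relations ξᵢ F^j_{β+e_ℓ} = ξ_ℓ F^j_{β+e_i} for all i, ℓ ∈ {1,…,n}, all j, and all multi-indices β with |β| = m−1. Then F = v ⊗^m ξ for some v ∈ V, i.e., F^j_β = v^j ξ^β for all |β| = m. -/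
lemma prod_pow_add_single {n : ℕ} (ξ : Fin n → ℂ) (β : Fin n → ℕ) (a : Fin n) :
    (∏ j, ξ j ^ ((β + Pi.single a 1) : Fin n → ℕ) j) = (∏ j, ξ j ^ β j) * ξ a := by
  simp only [Pi.add_apply, pow_add, Finset.prod_mul_distrib]
  congr 1
  simp [Pi.single_apply, apply_ite]

lemma sum_add_single {n : ℕ} (β : Fin n → ℕ) (a : Fin n) :
    (∑ j, ((β + Pi.single a 1) : Fin n → ℕ) j) = (∑ j, β j) + 1 := by
  simp only [Pi.add_apply, Finset.sum_add_distrib]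
  congr 1
  simp [Pi.single_apply]

/-- **Kernel of the symbol of `curl_m`.** If `ξ ∈ ℂⁿ` is nonzero and the coefficients
`F_β` (`|β| = m`) of a symmetric `m`-tensor with values in a finite-dimensional complex
vector space `V` satisfy the curl relations
`ξᵢ F_{β+e_ℓ} = ξ_ℓ F_{β+e_i}` for all `|β| = m−1`, then `F = v ⊗^m ξ` for some `v ∈ V`,
i.e. `F_β = ξ^β • v` for all `|β| = m`. -/
theorem stmt4 (n m : ℕ) (hm : 1 ≤ m) (V : Type*) [AddCommGroup V] [Module ℂ V]
    [FiniteDimensional ℂ V]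
    (ξ : Fin n → ℂ) (hξ : ξ ≠ 0) (F : (Fin n → ℕ) → V)
    (hcurl : ∀ i ℓ : Fin n, ∀ β : Fin n → ℕ, (∑ j, β j) = m - 1 →
      ξ i • F (β + Pi.single ℓ 1) = ξ ℓ • F (β + Pi.single i 1)) :
    ∃ v : V, ∀ β : Fin n → ℕ, (∑ j, β j) = m → F β = (∏ j, ξ j ^ β j) • v := by
  obtain ⟨i₀, hi₀⟩ : ∃ i, ξ i ≠ 0 := by
    by_contra h; push_neg at h; exact hξ (funext h)
  set δ : Fin n → ℕ := Pi.single i₀ m with hδ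
  have hprodδ : (∏ j, ξ j ^ δ j) = ξ i₀ ^ m := by
    simp [hδ, Pi.single_apply, apply_ite]
  have key : ∀ k : ℕ, ∀ β : Fin n → ℕ, (∑ j, β j) = m → m ≤ β i₀ + k →
      (ξ i₀) ^ m • F β = (∏ j, ξ j ^ β j) • F δ := by
    intro k
    induction k with
    | zero =>
      intro β hs hk
      have hβ : β = δ := by
        funext j
        by_cases hj : j = i₀
        · subst hj
          have : β j ≤ ∑ i, β i := Finset.single_le_sum (fun i _ => Nat.zero_le _) (Finset.mem_univ j)
          simp [hδ]; omega
        · have h1 : β i₀ + β j ≤ ∑ i, β i := by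
            have := Finset.add_sum_erase Finset.univ β (Finset.mem_univ i₀)
            have h2 : β j ≤ ∑ i ∈ Finset.univ.erase i₀, β i :=
              Finset.single_le_sum (fun i _ => Nat.zero_le _)
                (Finset.mem_erase.mpr ⟨hj, Finset.mem_univ j⟩)
            omega
          simp [hδ, Pi.single_apply, hj]; omega
      rw [hβ, hprodδ]
    | succ k ih =>
      intro β hs hk
      by_cases hcase : m ≤ β i₀ + k
      · exact ih β hs hcase
      push_neg at hcase
      have hβi₀ : β i₀ < m := by omega
      obtain ⟨ℓ, hℓ, hβℓ⟩ : ∃ ℓ, ℓ ≠ i₀ ∧ 0 < β ℓ := by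
        by_contra hc; push_neg at hc
        have : (∑ j, β j) = β i₀ := by
          apply Finset.sum_eq_single
          · intro b _ hb
            have := hc b hb; omega
          · intro hb; exact absurd (Finset.mem_univ i₀) hb
        omega
      set β' : Fin n → ℕ := fun j => if j = ℓ then β ℓ - 1 else β j with hβ'
      have hβeq : β = β' + Pi.single ℓ 1 := by
        funext j
        by_cases hj : j = ℓ <;> simp [hβ', hj, Pi.single_apply] <;> omega
      have hs' : (∑ j, β' j) = m - 1 := by
        have := sum_add_single β' ℓ
        rw [← hβeq] at this
        omega
      have hcu := hcurl i₀ ℓ β' hs'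
      set β'' : Fin n → ℕ := β' + Pi.single i₀ 1 with hβ''
      have hs'' : (∑ j, β'' j) = m := by
        rw [hβ'', sum_add_single]; omega
      have hβ''i₀ : β'' i₀ = β i₀ + 1 := by
        simp [hβ'', hβ', Pi.single_apply, hℓ.symm, Ne.symm hℓ]
      have ihh := ih β'' hs'' (by omega)
      have hmain : ξ i₀ • ((ξ i₀) ^ m • F β) = ξ i₀ • ((∏ j, ξ j ^ β j) • F δ) := by
        rw [smul_comm, hβeq, hcu, smul_comm, ihh, hβ'']
        rw [smul_smul, smul_smul, prod_pow_add_single, ← hβeq]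
        rw [show β = β' + Pi.single ℓ 1 from hβeq, prod_pow_add_single]
        congr 1; ring
      exact smul_right_injective V hi₀ hmain
  refine ⟨(ξ i₀ ^ m)⁻¹ • F δ, fun β hs => ?_⟩
  have h := key m β hs (by omega)
  have hne : (ξ i₀ : ℂ) ^ m ≠ 0 := pow_ne_zero _ hi₀
  rw [smul_smul, mul_comm, ← smul_smul, ← h, smul_smul, inv_mul_cancel₀ hne, one_smul]
end
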